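/- Let α, N, M, k be natural numbers. Let 𝔄 = (g_1,…,g_k) be a family of invertible (α+N)×(α+N) complex matrices and 𝔓 = (h_1,…,h_k) a family of invertible (α+M)×(α+M) complex matrices, regarded as multiple colligations, and let 𝔄∘𝔓 = (g_1∘h_1,…,g_k∘h_k) be their elementwise colligation product (a family of (α+(N+M))×(α+(N+M)) matrices). Let S, R be k×k complex matrices such that the matrices E(𝔄;S,R) and E(𝔓;S,R) are invertible. Then E(𝔄∘𝔓; S,R) is invertible and the two-variable characteristic functions satisfy χ(𝔄∘𝔓; S, R) = χ(𝔄; S, R) · χ(𝔓; S, R). -/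

import Mathlib

open Matrix

/-- Block-diagonal matrix `ã` of the `a`-blocks of a multiple colligation. -/
noncomputable def aT {k : ℕ} {A I : Type*} [DecidableEq (Fin k)]
    (g : Fin k → Matrix (A ⊕ I) (A ⊕ I) ℂ) : Matrix (A × Fin k) (A × Fin k) ℂ :=
  blockDiagonal fun j => (g j).toBlocks₁₁

/-- Block-diagonal matrix `b̃` of the `b`-blocks of a multiple colligation. -/
noncomputable def bT {k : ℕ} {A I : Type*}
    (g : Fin k → Matrix (A ⊕ I) (A ⊕ I) ℂ) : Matrix (A × Fin k) (I × Fin k) ℂ :=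
  blockDiagonal fun j => (g j).toBlocks₁₂

/-- Block-diagonal matrix `c̃` of the `c`-blocks of a multiple colligation. -/
noncomputable def cT {k : ℕ} {A I : Type*}
    (g : Fin k → Matrix (A ⊕ I) (A ⊕ I) ℂ) : Matrix (I × Fin k) (A × Fin k) ℂ :=
  blockDiagonal fun j => (g j).toBlocks₂₁

/-- Block-diagonal matrix `d̃` of the `d`-blocks of a multiple colligation. -/
noncomputable def dT {k : ℕ} {A I : Type*}
    (g : Fin k → Matrix (A ⊕ I) (A ⊕ I) ℂ) : Matrix (I × Fin k) (I × Fin k) ℂ :=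
  blockDiagonal fun j => (g j).toBlocks₂₂

/-- `S̃`: the Kronecker-type block matrix whose `(i,j)` block is `s_{ij} · 1`. -/
def sT {k : ℕ} (I : Type*) [DecidableEq I] (S : Matrix (Fin k) (Fin k) ℂ) :
    Matrix (I × Fin k) (I × Fin k) ℂ :=
  Matrix.of fun p q => if p.1 = q.1 then S p.2 q.2 else 0

/-- The multivariate characteristic function `χ(𝔄; S) = ã + b̃·(S̃ − d̃)⁻¹·c̃`. -/
noncomputable def chiM {k : ℕ} {A I : Type*} [Fintype A] [Fintype I] [DecidableEq I]
    (g : Fin k → Matrix (A ⊕ I) (A ⊕ I) ℂ) (S : Matrix (Fin k) (Fin k) ℂ) :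
    Matrix (A × Fin k) (A × Fin k) ℂ :=
  aT g + bT g * (sT I S - dT g)⁻¹ * cT g

/-- The family of inverse-transpose matrices `g_j' = (g_jᵗ)⁻¹`. -/
noncomputable def gP {k : ℕ} {A I : Type*} [Fintype A] [Fintype I]
    [DecidableEq A] [DecidableEq I]
    (g : Fin k → Matrix (A ⊕ I) (A ⊕ I) ℂ) : Fin k → Matrix (A ⊕ I) (A ⊕ I) ℂ :=
  fun j => ((g j)ᵀ)⁻¹

/-- `E(𝔄; S, R) = d̃ − S̃·d̃'·R̃`, where `d̃'` is the block-diagonal matrix of the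
`d`-blocks of the inverse transposes `(g_jᵗ)⁻¹`. -/
noncomputable def EMat {k : ℕ} {A I : Type*} [Fintype A] [Fintype I]
    [DecidableEq A] [DecidableEq I]
    (g : Fin k → Matrix (A ⊕ I) (A ⊕ I) ℂ) (S R : Matrix (Fin k) (Fin k) ℂ) :
    Matrix (I × Fin k) (I × Fin k) ℂ :=
  dT g - sT I S * dT (gP g) * sT I R

/-- The two-variable characteristic function `χ(𝔄; S, R)`, a `2 × 2` block matrix with
blocks of size `kα`:
`[[ã − b̃·E⁻¹·c̃, b̃·E⁻¹·S̃·c̃'], [−b̃'·R̃·E⁻¹·c̃, ã' + b̃'·R̃·E⁻¹·S̃·c̃']]`. -/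
noncomputable def chi2v {k : ℕ} {A I : Type*} [Fintype A] [Fintype I]
    [DecidableEq A] [DecidableEq I]
    (g : Fin k → Matrix (A ⊕ I) (A ⊕ I) ℂ) (S R : Matrix (Fin k) (Fin k) ℂ) :
    Matrix ((A × Fin k) ⊕ (A × Fin k)) ((A × Fin k) ⊕ (A × Fin k)) ℂ :=
  fromBlocks
    (aT g - bT g * (EMat g S R)⁻¹ * cT g)
    (bT g * (EMat g S R)⁻¹ * sT I S * cT (gP g))
    (-(bT (gP g) * sT I R * (EMat g S R)⁻¹ * cT g))
    (aT (gP g) + bT (gP g) * sT I R * (EMat g S R)⁻¹ * sT I S * cT (gP g))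

/-- The product of operator colligations. -/
noncomputable def colProd {A I J : Type*} [Fintype A]
    (g : Matrix (A ⊕ I) (A ⊕ I) ℂ) (h : Matrix (A ⊕ J) (A ⊕ J) ℂ) :
    Matrix (A ⊕ (I ⊕ J)) (A ⊕ (I ⊕ J)) ℂ :=
  fromBlocks (g.toBlocks₁₁ * h.toBlocks₁₁)
    (fromCols g.toBlocks₁₂ (g.toBlocks₁₁ * h.toBlocks₁₂))
    (fromRows (g.toBlocks₂₁ * h.toBlocks₁₁) h.toBlocks₂₁)
    (fromBlocks g.toBlocks₂₂ (g.toBlocks₂₁ * h.toBlocks₁₂) 0 h.toBlocks₂₂)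

/-!
Index the internal space of `𝔄∘𝔓` as `(N × k) ⊕ (M × k)`. In this ordering the block matrices
`b̃, c̃, d̃` of `𝔄∘𝔓` are assembled from those of `𝔄` and `𝔓`, and `d̃` is block upper triangular.
Since `g ∘ h` factors as `(g ⊕ 1)(1 ⊕ h)` up to reindexing, `((g ∘ h)ᵗ)⁻¹ = g' ∘ h'`, so the same
holds for the primed blocks. Hence `E(𝔄∘𝔓)` is block upper triangular with diagonal blocks
`E(𝔄)` and `E(𝔓)`, it is invertible, its inverse is explicit, and the product formula is a
block-by-block identity.
-/

open Matrix

namespace Colligation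

section ExtendByOne

variable {R ι κ ν : Type*}

def extendByOne [Zero R] [One R] [DecidableEq ν] (e : ι ≃ κ ⊕ ν) (m : Matrix κ κ R) :
    Matrix ι ι R :=
  (fromBlocks m 0 0 1).submatrix e e

variable [Semiring R] [DecidableEq ν] (e : ι ≃ κ ⊕ ν)

lemma extendByOne_mul [Fintype ι] [Fintype κ] [Fintype ν] (m m' : Matrix κ κ R) :
    extendByOne e m * extendByOne e m' = extendByOne e (m * m') := by
  simp [extendByOne, fromBlocks_multiply]

lemma extendByOne_one [DecidableEq ι] [DecidableEq κ] :
    extendByOne e (1 : Matrix κ κ R) = 1 := by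
  rw [extendByOne, fromBlocks_one, submatrix_one_equiv]

lemma transpose_extendByOne (m : Matrix κ κ R) : (extendByOne e m)ᵀ = extendByOne e mᵀ := by
  simp [extendByOne, fromBlocks_transpose]

end ExtendByOne

def sumMidToEnd (A I J : Type*) : A ⊕ (I ⊕ J) ≃ (A ⊕ J) ⊕ I :=
  (Equiv.sumCongr (Equiv.refl A) (Equiv.sumComm I J)).trans (Equiv.sumAssoc A J I).symm

section ColProd

variable {A I J : Type*} [Fintype A] [Fintype I] [Fintype J] [DecidableEq I] [DecidableEq J]

lemma colProd_eq_mul_extendByOne (g : Matrix (A ⊕ I) (A ⊕ I) ℂ)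
    (h : Matrix (A ⊕ J) (A ⊕ J) ℂ) :
    colProd g h =
      extendByOne (Equiv.sumAssoc A I J).symm g * extendByOne (sumMidToEnd A I J) h := by
  ext (a | i | j) (a' | i' | j') <;>
    simp [colProd, extendByOne, sumMidToEnd, mul_apply, Fintype.sum_sum_type, fromBlocks,
      toBlocks₁₁, toBlocks₁₂, toBlocks₂₁, toBlocks₂₂, one_apply]

lemma transpose_inv_colProd [DecidableEq A] {g : Matrix (A ⊕ I) (A ⊕ I) ℂ}
    {h : Matrix (A ⊕ J) (A ⊕ J) ℂ} (hg : IsUnit g) (hh : IsUnit h) :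
    ((colProd g h)ᵀ)⁻¹ = colProd (gᵀ)⁻¹ (hᵀ)⁻¹ := by
  have hgt : gᵀ * (gᵀ)⁻¹ = 1 :=
    mul_nonsing_inv _ ((isUnit_iff_isUnit_det _).mp ((isUnit_transpose g).mpr hg))
  have hht : hᵀ * (hᵀ)⁻¹ = 1 :=
    mul_nonsing_inv _ ((isUnit_iff_isUnit_det _).mp ((isUnit_transpose h).mpr hh))
  refine inv_eq_right_inv ?_
  rw [colProd_eq_mul_extendByOne, colProd_eq_mul_extendByOne, transpose_mul,
    transpose_extendByOne, transpose_extendByOne, mul_assoc, ← mul_assoc (extendByOne _ gᵀ),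
    extendByOne_mul, hgt, extendByOne_one, one_mul, extendByOne_mul, hht, extendByOne_one]

end ColProd

section BlockDiagonal

variable {R o : Type*} [Zero R] [DecidableEq o]

lemma blockDiagonal_fromBlocks {I J I' J' : Type*}
    (W : o → Matrix I I' R) (X : o → Matrix I J' R)
    (Y : o → Matrix J I' R) (Z : o → Matrix J J' R) :
    blockDiagonal (fun j => fromBlocks (W j) (X j) (Y j) (Z j)) =
      (fromBlocks (blockDiagonal W) (blockDiagonal X) (blockDiagonal Y) (blockDiagonal Z)).submatrix
        (Equiv.sumProdDistrib I J o) (Equiv.sumProdDistrib I' J' o) := by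
  ext ⟨p | p, j⟩ ⟨q | q, j'⟩ <;> simp [blockDiagonal_apply]

lemma blockDiagonal_fromCols {B I J : Type*} (X : o → Matrix B I R) (Y : o → Matrix B J R) :
    blockDiagonal (fun j => fromCols (X j) (Y j)) =
      (fromCols (blockDiagonal X) (blockDiagonal Y)).submatrix id (Equiv.sumProdDistrib I J o) := by
  ext ⟨p, j⟩ ⟨q | q, j'⟩ <;> simp [blockDiagonal_apply]

lemma blockDiagonal_fromRows {B I J : Type*} (X : o → Matrix I B R) (Y : o → Matrix J B R) :
    blockDiagonal (fun j => fromRows (X j) (Y j)) =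
      (fromRows (blockDiagonal X) (blockDiagonal Y)).submatrix (Equiv.sumProdDistrib I J o) id := by
  ext ⟨p | p, j⟩ ⟨q, j'⟩ <;> simp [blockDiagonal_apply]

end BlockDiagonal

lemma sT_sum {k : ℕ} {I J : Type*} [DecidableEq I] [DecidableEq J]
    (S : Matrix (Fin k) (Fin k) ℂ) :
    sT (I ⊕ J) S = (fromBlocks (sT I S) 0 0 (sT J S)).submatrix
      (Equiv.sumProdDistrib I J (Fin k)) (Equiv.sumProdDistrib I J (Fin k)) := by
  ext ⟨p | p, j⟩ ⟨q | q, j'⟩ <;> simp [sT]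

section ColProdBlocks

variable {k : ℕ} {A I J : Type*} [Fintype A]
  (g : Fin k → Matrix (A ⊕ I) (A ⊕ I) ℂ) (h : Fin k → Matrix (A ⊕ J) (A ⊕ J) ℂ)

lemma aT_colProd : aT (fun j => colProd (g j) (h j)) = aT g * aT h := by
  simp only [aT, colProd, toBlocks_fromBlocks₁₁, blockDiagonal_mul]

lemma bT_colProd : bT (fun j => colProd (g j) (h j)) =
    (fromCols (bT g) (aT g * bT h)).submatrix id (Equiv.sumProdDistrib I J (Fin k)) := by
  simp only [bT, aT, colProd, toBlocks_fromBlocks₁₂, blockDiagonal_fromCols, blockDiagonal_mul]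

lemma cT_colProd : cT (fun j => colProd (g j) (h j)) =
    (fromRows (cT g * aT h) (cT h)).submatrix (Equiv.sumProdDistrib I J (Fin k)) id := by
  simp only [cT, aT, colProd, toBlocks_fromBlocks₂₁, blockDiagonal_fromRows, blockDiagonal_mul]

lemma dT_colProd : dT (fun j => colProd (g j) (h j)) =
    (fromBlocks (dT g) (cT g * bT h) 0 (dT h)).submatrix
      (Equiv.sumProdDistrib I J (Fin k)) (Equiv.sumProdDistrib I J (Fin k)) := by
  simp only [dT, bT, cT, colProd, toBlocks_fromBlocks₂₂, blockDiagonal_fromBlocks,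
    blockDiagonal_mul, ← Pi.zero_def, blockDiagonal_zero]

end ColProdBlocks

section ColProdFamilies

variable {k : ℕ} {A I J : Type*} [Fintype A] [Fintype I] [Fintype J]
  [DecidableEq A] [DecidableEq I] [DecidableEq J]
  {g : Fin k → Matrix (A ⊕ I) (A ⊕ I) ℂ} {h : Fin k → Matrix (A ⊕ J) (A ⊕ J) ℂ}

lemma gP_colProd (hg : ∀ j, IsUnit (g j)) (hh : ∀ j, IsUnit (h j)) :
    gP (fun j => colProd (g j) (h j)) = fun j => colProd (gP g j) (gP h j) :=
  funext fun j => transpose_inv_colProd (hg j) (hh j)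

variable (g h) in
noncomputable def EMatCross (S R : Matrix (Fin k) (Fin k) ℂ) :
    Matrix (I × Fin k) (J × Fin k) ℂ :=
  cT g * bT h - sT I S * (cT (gP g) * bT (gP h)) * sT J R

variable (hg : ∀ j, IsUnit (g j)) (hh : ∀ j, IsUnit (h j)) (S R : Matrix (Fin k) (Fin k) ℂ)
include hg hh

lemma EMat_colProd : EMat (fun j => colProd (g j) (h j)) S R =
    (fromBlocks (EMat g S R) (EMatCross g h S R) 0 (EMat h S R)).submatrix
      (Equiv.sumProdDistrib I J (Fin k)) (Equiv.sumProdDistrib I J (Fin k)) := by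
  have hblocks : fromBlocks (EMat g S R) (EMatCross g h S R) 0 (EMat h S R) =
      fromBlocks (dT g) (cT g * bT h) 0 (dT h) - fromBlocks (sT I S) 0 0 (sT J S) *
        fromBlocks (dT (gP g)) (cT (gP g) * bT (gP h)) 0 (dT (gP h)) *
        fromBlocks (sT I R) 0 0 (sT J R) := by
    ext (i | i) (j | j) <;> simp [fromBlocks_multiply, EMat, EMatCross]
  rw [hblocks, submatrix_sub, EMat, gP_colProd hg hh, dT_colProd, dT_colProd, sT_sum S, sT_sum R,
    submatrix_mul_equiv, submatrix_mul_equiv]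
  rfl

lemma isUnit_EMat_colProd (hEg : IsUnit (EMat g S R)) (hEh : IsUnit (EMat h S R)) :
    IsUnit (EMat (fun j => colProd (g j) (h j)) S R) := by
  rw [isUnit_iff_isUnit_det, EMat_colProd hg hh, det_submatrix_equiv_self,
    ← isUnit_iff_isUnit_det]
  exact isUnit_fromBlocks_zero₂₁.mpr ⟨hEg, hEh⟩

lemma inv_EMat_colProd (hEg : IsUnit (EMat g S R)) (hEh : IsUnit (EMat h S R)) :
    (EMat (fun j => colProd (g j) (h j)) S R)⁻¹ =
      (fromBlocks (EMat g S R)⁻¹ (-((EMat g S R)⁻¹ * EMatCross g h S R * (EMat h S R)⁻¹)) 0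
        (EMat h S R)⁻¹).submatrix
        (Equiv.sumProdDistrib I J (Fin k)) (Equiv.sumProdDistrib I J (Fin k)) := by
  rw [EMat_colProd hg hh, inv_submatrix_equiv,
    inv_fromBlocks_zero₂₁_of_isUnit_iff _ _ _ (iff_of_true hEg hEh)]

end ColProdFamilies

end Colligation

open Colligation in
/-- multiplicativity of the two-variable characteristic function:
`χ(𝔄∘𝔓; S, R) = χ(𝔄; S, R)·χ(𝔓; S, R)`, where `𝔄∘𝔓` is the elementwise product
of the two families of colligations. -/
theorem chi2v_mul {α N M k : ℕ}
    (g : Fin k → Matrix (Fin α ⊕ Fin N) (Fin α ⊕ Fin N) ℂ)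
    (h : Fin k → Matrix (Fin α ⊕ Fin M) (Fin α ⊕ Fin M) ℂ)
    (hg : ∀ j, IsUnit (g j)) (hh : ∀ j, IsUnit (h j))
    (S R : Matrix (Fin k) (Fin k) ℂ)
    (hEg : IsUnit (EMat g S R)) (hEh : IsUnit (EMat h S R)) :
    IsUnit (EMat (fun j => colProd (g j) (h j)) S R) ∧
      chi2v (fun j => colProd (g j) (h j)) S R = chi2v g S R * chi2v h S R := by
  refine ⟨isUnit_EMat_colProd hg hh S R hEg hEh, ?_⟩
  rw [chi2v, chi2v, chi2v, inv_EMat_colProd hg hh S R hEg hEh, gP_colProd hg hh, aT_colProd,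
    aT_colProd, bT_colProd, bT_colProd, cT_colProd, cT_colProd, sT_sum S, sT_sum R,
    fromBlocks_multiply]
  simp only [submatrix_mul_equiv, submatrix_id_id]
  rw [fromBlocks_inj]
  refine ⟨?_, ?_, ?_, ?_⟩ <;>
  · simp only [fromCols_mul_fromBlocks, fromCols_mul_fromRows, EMatCross, Matrix.mul_zero,
      add_zero, zero_add, Matrix.mul_sub, Matrix.sub_mul, Matrix.mul_add, Matrix.add_mul,
      Matrix.mul_neg, Matrix.neg_mul, neg_sub, Matrix.mul_assoc]
    abel
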